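/- arXiv:1302.1670 — 3 statements merged into one kernel-verified Lean document; each statement's English description precedes it below -/
import Mathlib

section
/- For all fixed real numbers θ ∈ [0,1) and ζ ≥ 0, there exists a constant c > 0 such that for every u ∈ ℝ, ∑_{k∈ℤ} (1+|k|)^θ · log^ζ(2+|k|) / (2+|u−k|)² ≤ c · (1+|u|)^θ · log^ζ(2+|u|). -/
open Real

set_option maxHeartbeats 1000000 in
theorem stmt3 (θ ζ : ℝ) (hθ : θ ∈ Set.Ico (0 : ℝ) 1) (hζ : 0 ≤ ζ) :
    ∃ c : ℝ, 0 < c ∧ ∀ u : ℝ,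
      ∑' k : ℤ, (1 + |(k : ℝ)|) ^ θ * (Real.log (2 + |(k : ℝ)|)) ^ ζ / (2 + |u - (k : ℝ)|) ^ 2
        ≤ c * (1 + |u|) ^ θ * (Real.log (2 + |u|)) ^ ζ := by
  obtain ⟨hθ0, hθ1⟩ := hθ
  have hlog2 : 0 < Real.log 2 := Real.log_pos one_lt_two
  set p : ℝ := (3 - θ) / 2 with hp_def
  have hp : 1 < p := by rw [hp_def]; linarith
  have hp0 : 0 < p := by linarith
  set ε : ℝ := (1 - θ) / (2 * (ζ + 1)) with hε_def
  have hε : 0 < ε := by rw [hε_def]; exact div_pos (by linarith) (by positivity)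
  have hεζ : ε * ζ ≤ (1 - θ) / 2 := by
    rw [hε_def, div_mul_eq_mul_div, div_le_div_iff₀ (by positivity) (by norm_num)]
    nlinarith
  -- summability of the master majorant
  have hSsum : Summable (fun m : ℤ => (1 + |(m : ℝ)|) ^ (-p)) := by
    have h0 := (Real.summable_one_div_int_add_rpow (1/2) p).mpr hp
    refine Summable.of_nonneg_of_le (fun m => Real.rpow_nonneg (by positivity) _)
      (fun m => ?_) h0
    have hmhalf : (1:ℝ)/2 ≤ |(m : ℝ) + 1/2| := by
      rcases le_or_gt 0 m with h | h
      · have : (0:ℝ) ≤ (m:ℝ) := by exact_mod_cast h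
        rw [abs_of_nonneg (by linarith)]; linarith
      · have hm1 : (m : ℤ) ≤ -1 := by omega
        have : (m:ℝ) ≤ -1 := by exact_mod_cast hm1
        rw [abs_of_nonpos (by linarith)]; linarith
    have hle : |(m : ℝ) + 1/2| ≤ 1 + |(m : ℝ)| := by
      calc |(m : ℝ) + 1/2| ≤ |(m:ℝ)| + |(1:ℝ)/2| := abs_add_le _ _
        _ ≤ 1 + |(m:ℝ)| := by rw [abs_of_nonneg (by norm_num : (0:ℝ) ≤ 1/2)]; linarith
    rw [Real.rpow_neg (by positivity), one_div]
    exact inv_anti₀ (Real.rpow_pos_of_pos (by linarith) _)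
      (Real.rpow_le_rpow (abs_nonneg _) hle hp0.le)
  set S : ℝ := ∑' m : ℤ, (1 + |(m : ℝ)|) ^ (-p) with hS_def
  have hS0 : 0 ≤ S := tsum_nonneg fun m => Real.rpow_nonneg (by positivity) _
  set C1 : ℝ := (2 / Real.log 2) ^ ζ with hC1_def
  have hC10 : 0 ≤ C1 := Real.rpow_nonneg (by positivity) _
  set C2 : ℝ := (1 / ε) ^ ζ with hC2_def
  have hC20 : 0 ≤ C2 := Real.rpow_nonneg (by positivity) _
  refine ⟨C1 * C2 * S + 1, by positivity, fun u => ?_⟩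
  set n : ℤ := round u with hn_def
  have hround : |u - (n : ℝ)| ≤ 1/2 := abs_sub_round u
  set A : ℝ := (1 + |u|) ^ θ * (Real.log (2 + |u|)) ^ ζ with hA_def
  have hA0 : 0 ≤ A := by
    apply mul_nonneg (Real.rpow_nonneg (by positivity) _)
    exact Real.rpow_nonneg (Real.log_nonneg (by have := abs_nonneg u; linarith)) _
  -- the pointwise bound
  have key : ∀ k : ℤ,
      (1 + |(k : ℝ)|) ^ θ * (Real.log (2 + |(k : ℝ)|)) ^ ζ / (2 + |u - (k : ℝ)|) ^ 2
        ≤ (C1 * C2 * A) * (1 + |((k - n : ℤ) : ℝ)|) ^ (-p) := by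
    intro k
    set x : ℝ := |(k : ℝ)| with hx_def
    set v : ℝ := |u| with hv_def
    set t : ℝ := |u - (k : ℝ)| with ht_def
    have hx0 : 0 ≤ x := abs_nonneg _
    have hv0 : 0 ≤ v := abs_nonneg _
    have ht0 : 0 ≤ t := abs_nonneg _
    have hD0 : (0:ℝ) < 2 + t := by linarith
    have hLu0 : Real.log 2 ≤ Real.log (2 + v) := Real.log_le_log (by norm_num) (by linarith)
    have hLD0 : Real.log 2 ≤ Real.log (2 + t) := Real.log_le_log (by norm_num) (by linarith)
    have hLk0 : 0 ≤ Real.log (2 + x) := Real.log_nonneg (by linarith)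
    -- x ≤ v + t
    have hxvt : x ≤ v + t := by
      have h := abs_add_le u (-(u - (k:ℝ)))
      rw [abs_neg, show u + -(u - (k:ℝ)) = (k:ℝ) by ring] at h
      exact h
    -- (1+x)^θ ≤ (1+v)^θ * (2+t)^θ
    have h1 : (1 + x) ^ θ ≤ (1 + v) ^ θ * (2 + t) ^ θ := by
      rw [← Real.mul_rpow (by linarith) (by linarith)]
      apply Real.rpow_le_rpow (by linarith) (by nlinarith) hθ0
    -- log bound
    have h2 : Real.log (2 + x) ≤ 2 / Real.log 2 * (Real.log (2 + v) * Real.log (2 + t)) := by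
      have e1 : Real.log (2 + x) ≤ Real.log ((2 + v) * (2 + t)) := by
        apply Real.log_le_log (by linarith)
        nlinarith
      rw [Real.log_mul (by positivity) (by positivity)] at e1
      have : Real.log (2 + v) + Real.log (2 + t) ≤
          2 / Real.log 2 * (Real.log (2 + v) * Real.log (2 + t)) := by
        rw [div_mul_eq_mul_div, le_div_iff₀ hlog2]
        nlinarith
      linarith
    have h2' : (Real.log (2 + x)) ^ ζ ≤ C1 * ((Real.log (2 + v)) ^ ζ * (Real.log (2 + t)) ^ ζ) := by
      calc (Real.log (2 + x)) ^ ζ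
          ≤ (2 / Real.log 2 * (Real.log (2 + v) * Real.log (2 + t))) ^ ζ :=
            Real.rpow_le_rpow hLk0 h2 hζ
        _ = C1 * ((Real.log (2 + v)) ^ ζ * (Real.log (2 + t)) ^ ζ) := by
            rw [Real.mul_rpow (div_nonneg (by norm_num) hlog2.le)
                (mul_nonneg (by linarith) (by linarith)),
              Real.mul_rpow (by linarith) (by linarith), hC1_def]
    -- log(2+t)^ζ ≤ C2 * (2+t)^(ε*ζ)
    have h3 : (Real.log (2 + t)) ^ ζ ≤ C2 * (2 + t) ^ (ε * ζ) := by
      have e1 : Real.log (2 + t) ≤ 1 / ε * (2 + t) ^ ε := by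
        have := Real.log_le_rpow_div (le_of_lt hD0) hε
        rw [div_eq_mul_inv, mul_comm] at this
        simpa [one_div, div_eq_mul_inv] using this
      calc (Real.log (2 + t)) ^ ζ ≤ (1 / ε * (2 + t) ^ ε) ^ ζ :=
            Real.rpow_le_rpow (by linarith) e1 hζ
        _ = C2 * (2 + t) ^ (ε * ζ) := by
            rw [Real.mul_rpow (by positivity) (Real.rpow_nonneg hD0.le _),
              ← Real.rpow_mul hD0.le, hC2_def]
    -- numerator bound
    have hnum : (1 + x) ^ θ * (Real.log (2 + x)) ^ ζ ≤
        (C1 * C2 * A) * ((2 + t) ^ θ * (2 + t) ^ (ε * ζ)) := by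
      have step : (1 + x) ^ θ * (Real.log (2 + x)) ^ ζ ≤
          ((1 + v) ^ θ * (2 + t) ^ θ) * (C1 * ((Real.log (2 + v)) ^ ζ * (C2 * (2 + t) ^ (ε * ζ)))) := by
        apply mul_le_mul h1 _ (Real.rpow_nonneg hLk0 _)
          (mul_nonneg (Real.rpow_nonneg (by linarith) _) (Real.rpow_nonneg hD0.le _))
        calc (Real.log (2 + x)) ^ ζ
            ≤ C1 * ((Real.log (2 + v)) ^ ζ * (Real.log (2 + t)) ^ ζ) := h2'
          _ ≤ C1 * ((Real.log (2 + v)) ^ ζ * (C2 * (2 + t) ^ (ε * ζ))) := by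
              apply mul_le_mul_of_nonneg_left _ hC10
              exact mul_le_mul_of_nonneg_left h3 (Real.rpow_nonneg (by linarith) _)
      calc (1 + x) ^ θ * (Real.log (2 + x)) ^ ζ
          ≤ ((1 + v) ^ θ * (2 + t) ^ θ) * (C1 * ((Real.log (2 + v)) ^ ζ * (C2 * (2 + t) ^ (ε * ζ)))) := step
        _ = (C1 * C2 * A) * ((2 + t) ^ θ * (2 + t) ^ (ε * ζ)) := by rw [hA_def]; ring
    -- divide by (2+t)^2 and estimate
    have hD2 : (0:ℝ) < (2 + t) ^ 2 := by positivity
    have hdiv : (1 + x) ^ θ * (Real.log (2 + x)) ^ ζ / (2 + t) ^ 2 ≤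
        (C1 * C2 * A) * (2 + t) ^ (θ + ε * ζ - 2) := by
      have e1 : (C1 * C2 * A) * ((2 + t) ^ θ * (2 + t) ^ (ε * ζ)) / (2 + t) ^ 2 =
          (C1 * C2 * A) * (2 + t) ^ (θ + ε * ζ - 2) := by
        rw [← Real.rpow_add hD0, ← Real.rpow_natCast (2 + t) 2, mul_div_assoc,
          ← Real.rpow_sub hD0]
        norm_num
      rw [← e1]
      exact div_le_div_of_nonneg_right hnum hD2.le |>.trans (le_refl _)
    have hexp : (2 + t) ^ (θ + ε * ζ - 2) ≤ (2 + t) ^ (-p) := by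
      apply Real.rpow_le_rpow_of_exponent_le (by linarith)
      rw [hp_def]; linarith
    have hshift : (2 + t) ^ (-p) ≤ (1 + |((k - n : ℤ) : ℝ)|) ^ (-p) := by
      apply Real.rpow_le_rpow_of_nonpos (by positivity) _ (by linarith)
      push_cast
      have : |(k:ℝ) - (n:ℝ)| ≤ |(k:ℝ) - u| + |u - (n:ℝ)| := by
        calc |(k:ℝ) - (n:ℝ)| = |((k:ℝ) - u) + (u - (n:ℝ))| := by ring_nf
          _ ≤ |(k:ℝ) - u| + |u - (n:ℝ)| := abs_add_le _ _
      have habs : |(k:ℝ) - u| = t := by rw [ht_def, abs_sub_comm]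
      linarith
    calc (1 + x) ^ θ * (Real.log (2 + x)) ^ ζ / (2 + t) ^ 2
        ≤ (C1 * C2 * A) * (2 + t) ^ (θ + ε * ζ - 2) := hdiv
      _ ≤ (C1 * C2 * A) * (1 + |((k - n : ℤ) : ℝ)|) ^ (-p) := by
          apply mul_le_mul_of_nonneg_left (hexp.trans hshift) (by positivity)
  -- summability of shifted majorant
  have hg : Summable (fun k : ℤ => (1 + |((k - n : ℤ) : ℝ)|) ^ (-p)) :=
    (Equiv.subRight n).summable_iff.mpr hSsum
  have hf0 : ∀ k : ℤ, 0 ≤ (1 + |(k : ℝ)|) ^ θ * (Real.log (2 + |(k : ℝ)|)) ^ ζ / (2 + |u - (k : ℝ)|) ^ 2 := by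
    intro k
    have : 0 ≤ Real.log (2 + |(k:ℝ)|) := Real.log_nonneg (by have := abs_nonneg ((k:ℝ)); linarith)
    positivity
  have hfsum : Summable (fun k : ℤ =>
      (1 + |(k : ℝ)|) ^ θ * (Real.log (2 + |(k : ℝ)|)) ^ ζ / (2 + |u - (k : ℝ)|) ^ 2) :=
    Summable.of_nonneg_of_le hf0 key (hg.mul_left _)
  have htshift : ∑' k : ℤ, (1 + |((k - n : ℤ) : ℝ)|) ^ (-p) = S := by
    rw [hS_def]
    exact (Equiv.subRight n).tsum_eq (fun m : ℤ => (1 + |(m : ℝ)|) ^ (-p))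
  calc ∑' k : ℤ, (1 + |(k : ℝ)|) ^ θ * (Real.log (2 + |(k : ℝ)|)) ^ ζ / (2 + |u - (k : ℝ)|) ^ 2
      ≤ ∑' k : ℤ, (C1 * C2 * A) * (1 + |((k - n : ℤ) : ℝ)|) ^ (-p) :=
        Summable.tsum_le_tsum key hfsum (hg.mul_left _)
    _ = (C1 * C2 * A) * S := by rw [tsum_mul_left, htshift]
    _ ≤ (C1 * C2 * S + 1) * (1 + |u|) ^ θ * (Real.log (2 + |u|)) ^ ζ := by
        rw [hA_def]; nlinarith [hA0, mul_nonneg (mul_nonneg hC10 hC20) hS0]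
end

section
/- Let M₁ < M₂ be reals, t₀ ∈ [M₁, M₂], α > 1, and let d < e be positive reals. For j ∈ ℕ define D_j := { k ∈ ℤ : k·2^{−j} ∈ [M₁,M₂] and j^{−e} ≤ |t₀ − k·2^{−j}| ≤ j^{−d} }. Then for all sufficiently large j, D_j is nonempty and every k ∈ D_j satisfies M₁ + 2^{−j/(2α)} ≤ k·2^{−j} ≤ M₂ − 2^{−j/(2α)}. -/
set_option maxHeartbeats 1000000

open Filter Real

theorem stmt13 (M₁ M₂ t₀ α d e : ℝ) (hM : M₁ < M₂) (ht₀ : t₀ ∈ Set.Icc M₁ M₂)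
    (hα : 1 < α) (hd : 0 < d) (hde : d < e) :
    ∃ J : ℕ, ∀ j : ℕ, J ≤ j →
      (∃ k : ℤ, (k : ℝ) * 2 ^ (-(j : ℝ)) ∈ Set.Icc M₁ M₂ ∧
        (j : ℝ) ^ (-e) ≤ |t₀ - (k : ℝ) * 2 ^ (-(j : ℝ))| ∧
        |t₀ - (k : ℝ) * 2 ^ (-(j : ℝ))| ≤ (j : ℝ) ^ (-d)) ∧
      ∀ k : ℤ, ((k : ℝ) * 2 ^ (-(j : ℝ)) ∈ Set.Icc M₁ M₂ ∧
          (j : ℝ) ^ (-e) ≤ |t₀ - (k : ℝ) * 2 ^ (-(j : ℝ))| ∧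
          |t₀ - (k : ℝ) * 2 ^ (-(j : ℝ))| ≤ (j : ℝ) ^ (-d)) →
        M₁ + 2 ^ (-(j : ℝ)/(2*α)) ≤ (k : ℝ) * 2 ^ (-(j : ℝ)) ∧
        (k : ℝ) * 2 ^ (-(j : ℝ)) ≤ M₂ - 2 ^ (-(j : ℝ)/(2*α)) := by
  obtain ⟨hM1t, htM2⟩ := ht₀
  have h2 : (0:ℝ) < 2 := two_pos
  have hlog2 : 0 < Real.log 2 := Real.log_pos one_lt_two
  have hα0 : 0 < α := lt_trans one_pos hα
  set b₂ : ℝ := Real.log 2 / (2*α) with hb₂def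
  have hb₂ : 0 < b₂ := div_pos hlog2 (by linarith)
  set c₁ : ℝ := if M₁ < t₀ then t₀ - M₁ else 1 with hc₁def
  set c₂ : ℝ := if t₀ < M₂ then M₂ - t₀ else 1 with hc₂def
  have hc₁ : 0 < c₁ := by rw [hc₁def]; split <;> [linarith; norm_num]
  have hc₂ : 0 < c₂ := by rw [hc₂def]; split <;> [linarith; norm_num]
  have L1 : Tendsto (fun x:ℝ => x ^ (-d)) atTop (nhds 0) := tendsto_rpow_neg_atTop hd
  have L2 : Tendsto (fun x:ℝ => x ^ (-(e-d))) atTop (nhds 0) :=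
    tendsto_rpow_neg_atTop (by linarith)
  have L3 : Tendsto (fun x:ℝ => x ^ d * Real.exp (-(Real.log 2) * x)) atTop (nhds 0) :=
    tendsto_rpow_mul_exp_neg_mul_atTop_nhds_zero d _ hlog2
  have L4 : Tendsto (fun x:ℝ => x ^ e * Real.exp (-b₂ * x)) atTop (nhds 0) :=
    tendsto_rpow_mul_exp_neg_mul_atTop_nhds_zero e _ hb₂
  have L5 : Tendsto (fun x:ℝ => Real.exp (-b₂ * x)) atTop (nhds 0) := by
    have := tendsto_rpow_mul_exp_neg_mul_atTop_nhds_zero 0 _ hb₂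
    refine this.congr' ?_
    filter_upwards [eventually_gt_atTop (0:ℝ)] with x hx
    simp [Real.rpow_zero]
  have hE1 : ∀ᶠ x:ℝ in atTop, x ^ (-(e-d)) ≤ 1/2 := L2.eventually (eventually_le_nhds (by norm_num))
  have hE2 : ∀ᶠ x:ℝ in atTop, x ^ d * Real.exp (-(Real.log 2) * x) ≤ 1/2 :=
    L3.eventually (eventually_le_nhds (by norm_num))
  have hE3 : ∀ᶠ x:ℝ in atTop, x ^ e * Real.exp (-b₂ * x) ≤ 1 :=
    L4.eventually (eventually_le_nhds (by norm_num))
  have hE4 : ∀ᶠ x:ℝ in atTop, x ^ (-d) + Real.exp (-b₂ * x) ≤ c₁ := by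
    have := L1.add L5
    rw [add_zero] at this
    exact this.eventually (eventually_le_nhds hc₁)
  have hE5 : ∀ᶠ x:ℝ in atTop, x ^ (-d) + Real.exp (-b₂ * x) ≤ c₂ := by
    have := L1.add L5
    rw [add_zero] at this
    exact this.eventually (eventually_le_nhds hc₂)
  have hE6 : ∀ᶠ x:ℝ in atTop, x ^ (-d) ≤ (M₂ - M₁)/2 :=
    L1.eventually (eventually_le_nhds (by linarith))
  have hall : ∀ᶠ x:ℝ in atTop, 1 ≤ x ∧ x ^ (-(e-d)) ≤ 1/2 ∧
      x ^ d * Real.exp (-(Real.log 2) * x) ≤ 1/2 ∧ x ^ e * Real.exp (-b₂ * x) ≤ 1 ∧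
      x ^ (-d) + Real.exp (-b₂ * x) ≤ c₁ ∧ x ^ (-d) + Real.exp (-b₂ * x) ≤ c₂ ∧
      x ^ (-d) ≤ (M₂ - M₁)/2 :=
    (eventually_ge_atTop 1).and (hE1.and (hE2.and (hE3.and (hE4.and (hE5.and hE6)))))
  have hnat : ∀ᶠ j:ℕ in atTop, 1 ≤ (j:ℝ) ∧ (j:ℝ) ^ (-(e-d)) ≤ 1/2 ∧
      (j:ℝ) ^ d * Real.exp (-(Real.log 2) * (j:ℝ)) ≤ 1/2 ∧
      (j:ℝ) ^ e * Real.exp (-b₂ * (j:ℝ)) ≤ 1 ∧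
      (j:ℝ) ^ (-d) + Real.exp (-b₂ * (j:ℝ)) ≤ c₁ ∧
      (j:ℝ) ^ (-d) + Real.exp (-b₂ * (j:ℝ)) ≤ c₂ ∧
      (j:ℝ) ^ (-d) ≤ (M₂ - M₁)/2 :=
    tendsto_natCast_atTop_atTop.eventually hall
  obtain ⟨J, hJ⟩ := eventually_atTop.1 hnat
  refine ⟨J, fun j hj => ?_⟩
  obtain ⟨hx1, A1, A2, A3, A4, A5, A6⟩ := hJ j hj
  set x : ℝ := (j:ℝ) with hxdef
  have hxpos : 0 < x := lt_of_lt_of_le one_pos hx1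
  have heq2 : ∀ y:ℝ, (2:ℝ) ^ y = Real.exp (Real.log 2 * y) := fun y =>
    Real.rpow_def_of_pos h2 y
  have hεeq : (2:ℝ) ^ (-x/(2*α)) = Real.exp (-b₂ * x) := by
    rw [heq2, hb₂def]; congr 1; field_simp
  have hdpos : 0 < x ^ (-d) := Real.rpow_pos_of_pos hxpos _
  have hepos : 0 < x ^ (-e) := Real.rpow_pos_of_pos hxpos _
  have hddpos : 0 < x ^ d := Real.rpow_pos_of_pos hxpos _
  have heepos : 0 < x ^ e := Real.rpow_pos_of_pos hxpos _
  have hdinv : x ^ (-d) * x ^ d = 1 := by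
    rw [← Real.rpow_add hxpos]; simp
  have heinv : x ^ (-e) * x ^ e = 1 := by
    rw [← Real.rpow_add hxpos]; simp
  -- hB : x^(-e) ≤ (1/2) x^(-d)
  have hB : x ^ (-e) ≤ (1/2) * x ^ (-d) := by
    have h : x ^ (-e) = x ^ (-d) * x ^ (-(e-d)) := by
      rw [← Real.rpow_add hxpos]; ring_nf
    rw [h]
    nlinarith [mul_le_mul_of_nonneg_left A1 hdpos.le]
  -- hC : 2^(-x) ≤ (1/2) x^(-d)
  have hC : (2:ℝ) ^ (-x) ≤ (1/2) * x ^ (-d) := by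
    rw [heq2, show Real.log 2 * (-x) = -(Real.log 2) * x by ring]
    nlinarith [mul_le_mul_of_nonneg_left A2 hdpos.le, Real.exp_pos (-(Real.log 2) * x)]
  -- hD : ε ≤ x^(-e)
  have hD : (2:ℝ) ^ (-x/(2*α)) ≤ x ^ (-e) := by
    rw [hεeq]
    nlinarith [mul_le_mul_of_nonneg_left A3 hepos.le, Real.exp_pos (-b₂ * x)]
  have hεpos : 0 < (2:ℝ) ^ (-x/(2*α)) := Real.rpow_pos_of_pos h2 _
  have hE4' : x ^ (-d) + (2:ℝ) ^ (-x/(2*α)) ≤ c₁ := by rw [hεeq]; exact A4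
  have hE5' : x ^ (-d) + (2:ℝ) ^ (-x/(2*α)) ≤ c₂ := by rw [hεeq]; exact A5
  have hpow : 0 < (2:ℝ) ^ (-x) := Real.rpow_pos_of_pos h2 _
  have h21 : (2:ℝ) ^ x * (2:ℝ) ^ (-x) = 1 := by rw [← Real.rpow_add h2]; simp
  constructor
  · -- existence
    rcases le_or_gt t₀ ((M₁+M₂)/2) with ht | ht
    · set r : ℝ := (2:ℝ) ^ x * (t₀ + x ^ (-e)) with hr
      have hk1 : r ≤ (⌈r⌉ : ℝ) := Int.le_ceil _
      have hk2 : ((⌈r⌉ : ℤ) : ℝ) < r + 1 := Int.ceil_lt_add_one _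
      have hy1 : t₀ + x ^ (-e) ≤ (⌈r⌉ : ℝ) * (2:ℝ) ^ (-x) := by
        have h := mul_le_mul_of_nonneg_right hk1 hpow.le
        calc t₀ + x ^ (-e) = r * (2:ℝ) ^ (-x) := by
              rw [hr, mul_comm ((2:ℝ)^x) _, mul_assoc, h21, mul_one]
          _ ≤ _ := h
      have hy2 : (⌈r⌉ : ℝ) * (2:ℝ) ^ (-x) ≤ t₀ + x ^ (-e) + (2:ℝ) ^ (-x) := by
        have h := mul_le_mul_of_nonneg_right hk2.le hpow.le
        calc (⌈r⌉ : ℝ) * (2:ℝ) ^ (-x) ≤ (r + 1) * (2:ℝ) ^ (-x) := h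
          _ = t₀ + x ^ (-e) + (2:ℝ) ^ (-x) := by
              rw [add_mul, one_mul, hr, mul_comm ((2:ℝ)^x) _, mul_assoc, h21, mul_one]
      refine ⟨⌈r⌉, ⟨by linarith, by linarith⟩, ?_, ?_⟩ <;>
        rw [abs_of_nonpos (by linarith)] <;> linarith
    · set r : ℝ := (2:ℝ) ^ x * (t₀ - x ^ (-e)) with hr
      have hk1 : ((⌊r⌋ : ℤ) : ℝ) ≤ r := Int.floor_le _
      have hk2 : r - 1 < ((⌊r⌋ : ℤ) : ℝ) := Int.sub_one_lt_floor _
      have hy1 : (⌊r⌋ : ℝ) * (2:ℝ) ^ (-x) ≤ t₀ - x ^ (-e) := by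
        have h := mul_le_mul_of_nonneg_right hk1 hpow.le
        calc (⌊r⌋ : ℝ) * (2:ℝ) ^ (-x) ≤ r * (2:ℝ) ^ (-x) := h
          _ = t₀ - x ^ (-e) := by rw [hr, mul_comm ((2:ℝ)^x) _, mul_assoc, h21, mul_one]
      have hy2 : t₀ - x ^ (-e) - (2:ℝ) ^ (-x) ≤ (⌊r⌋ : ℝ) * (2:ℝ) ^ (-x) := by
        have h := mul_le_mul_of_nonneg_right hk2.le hpow.le
        calc t₀ - x ^ (-e) - (2:ℝ) ^ (-x) = (r - 1) * (2:ℝ) ^ (-x) := by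
              rw [sub_mul, one_mul, hr, mul_comm ((2:ℝ)^x) _, mul_assoc, h21, mul_one]
          _ ≤ _ := h
      refine ⟨⌊r⌋, ⟨by linarith, by linarith⟩, ?_, ?_⟩ <;>
        rw [abs_of_nonneg (by linarith)] <;> linarith
  · -- inclusion
    rintro k ⟨⟨hkM₁, hkM₂⟩, hlo, hhi⟩
    constructor
    · rcases le_or_gt t₀ ((k:ℝ) * (2:ℝ) ^ (-x)) with h | h
      · rw [abs_of_nonpos (by linarith)] at hlo
        linarith
      · have hM1lt : M₁ < t₀ := lt_of_le_of_lt hkM₁ h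
        have : c₁ = t₀ - M₁ := if_pos hM1lt
        rw [abs_of_nonneg (by linarith)] at hhi
        rw [this] at hE4'
        linarith
    · rcases le_or_gt t₀ ((k:ℝ) * (2:ℝ) ^ (-x)) with h | h
      · have hne : t₀ ≠ (k:ℝ) * (2:ℝ) ^ (-x) := by
          intro heq
          rw [heq, sub_self, abs_zero] at hlo
          linarith
        have htlt : t₀ < M₂ := lt_of_lt_of_le (h.lt_of_ne hne) hkM₂
        have : c₂ = M₂ - t₀ := if_pos htlt
        rw [abs_of_nonpos (by linarith)] at hhi
        rw [this] at hE5'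
        linarith
      · rw [abs_of_nonneg (by linarith)] at hlo
        linarith
end

section
/- Let R > 1, α > 1, and m₀ := ⌊log₂(3R+2)⌋ + 1. Fix t₀ ∈ ℝ and for j ∈ ℕ set r_j := j·m₀ and l_j := ⌊2^{r_j} t₀ + R + 2⌋. Then for all j, (R+1)·2^{−r_j} < lⱼ·2^{−r_j} − t₀ < (R+1)·2^{1−r_j}, and moreover for all j ∈ ℕ and p ∈ ℕ with p ≥ 1, R·2^{−r_j} + R·2^{−r_{j+p}} < | l_j·2^{−r_j} − l_{j+p}·2^{−r_{j+p}} |. Consequently the intervals [l_j 2^{−r_j} − R 2^{−r_j}, l_j 2^{−r_j} + R 2^{−r_j}], j ∈ ℕ, are pairwise disjoint. -/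
theorem stmt18 (R t₀ : ℝ) (hR : 1 < R)
    (m₀ : ℤ) (hm₀ : m₀ = ⌊Real.logb 2 (3*R + 2)⌋ + 1)
    (r : ℕ → ℤ) (hr : ∀ j, r j = j * m₀)
    (l : ℕ → ℤ) (hl : ∀ j, l j = ⌊(2 : ℝ) ^ (r j) * t₀ + R + 2⌋) :
    (∀ j : ℕ, (R + 1) * (2 : ℝ) ^ (-(r j)) < (l j : ℝ) * (2 : ℝ) ^ (-(r j)) - t₀ ∧
      (l j : ℝ) * (2 : ℝ) ^ (-(r j)) - t₀ < (R + 1) * (2 : ℝ) ^ (1 - r j)) ∧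
    (∀ j p : ℕ, 1 ≤ p →
      R * (2 : ℝ) ^ (-(r j)) + R * (2 : ℝ) ^ (-(r (j + p))) <
        |(l j : ℝ) * (2 : ℝ) ^ (-(r j)) - (l (j + p) : ℝ) * (2 : ℝ) ^ (-(r (j + p)))|) ∧
    Pairwise (fun j j' : ℕ => Disjoint
      (Set.Icc ((l j : ℝ) * (2 : ℝ) ^ (-(r j)) - R * (2 : ℝ) ^ (-(r j)))
        ((l j : ℝ) * (2 : ℝ) ^ (-(r j)) + R * (2 : ℝ) ^ (-(r j))))
      (Set.Icc ((l j' : ℝ) * (2 : ℝ) ^ (-(r j')) - R * (2 : ℝ) ^ (-(r j')))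
        ((l j' : ℝ) * (2 : ℝ) ^ (-(r j')) + R * (2 : ℝ) ^ (-(r j'))))) := by
  have h2ne : (2:ℝ) ≠ 0 := by norm_num
  have hQpos : ∀ n : ℤ, (0:ℝ) < (2:ℝ) ^ n := fun n => zpow_pos (by norm_num) n
  have hm1 : 1 ≤ m₀ := by
    have : (0:ℤ) ≤ ⌊Real.logb 2 (3*R + 2)⌋ :=
      Int.floor_nonneg.mpr (Real.logb_nonneg one_lt_two (by linarith))
    omega
  -- 2^{m₀} > 3R+2
  have hpow : 3*R + 2 < (2:ℝ) ^ m₀ := by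
    have h1 : Real.logb 2 (3*R + 2) < (m₀ : ℝ) := by
      have := Int.lt_floor_add_one (Real.logb 2 (3*R + 2))
      rw [hm₀]; push_cast; linarith
    calc 3*R + 2 = (2:ℝ) ^ (Real.logb 2 (3*R + 2)) :=
          (Real.rpow_logb (by norm_num) (by norm_num) (by linarith)).symm
      _ < (2:ℝ) ^ ((m₀:ℝ)) := (Real.rpow_lt_rpow_left_iff (by norm_num)).mpr h1
      _ = (2:ℝ) ^ m₀ := Real.rpow_intCast 2 m₀
  set ε : ℝ := (2:ℝ) ^ (-m₀) with hε
  have hεpos : 0 < ε := hQpos _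
  have hε1 : ε * (3*R + 2) < 1 := by
    have h : ε * (2:ℝ) ^ m₀ = 1 := by
      rw [hε, ← zpow_add₀ h2ne]; simp
    nlinarith [mul_lt_mul_of_pos_left hpow hεpos]
  -- part 1
  have hprod : ∀ j : ℕ, (2:ℝ) ^ (r j) * (2:ℝ) ^ (-(r j)) = 1 := by
    intro j; rw [← zpow_add₀ h2ne]; simp
  have key : ∀ j : ℕ, (l j : ℝ) * (2:ℝ) ^ (-(r j)) - t₀ =
      ((l j : ℝ) - (2:ℝ) ^ (r j) * t₀) * (2:ℝ) ^ (-(r j)) := by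
    intro j
    have h := hprod j
    have : t₀ = (2:ℝ) ^ (r j) * t₀ * (2:ℝ) ^ (-(r j)) := by
      rw [mul_comm ((2:ℝ) ^ (r j)) t₀, mul_assoc, h, mul_one]
    nlinarith [this]
  have hfl : ∀ j : ℕ, (2:ℝ) ^ (r j) * t₀ + R + 1 < (l j : ℝ) ∧
      (l j : ℝ) ≤ (2:ℝ) ^ (r j) * t₀ + R + 2 := by
    intro j
    constructor
    · have := Int.sub_one_lt_floor ((2:ℝ) ^ (r j) * t₀ + R + 2)
      rw [hl]; linarith
    · rw [hl]; exact Int.floor_le _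
  have hone : ∀ j : ℕ, (2:ℝ) ^ ((1:ℤ) - r j) = 2 * (2:ℝ) ^ (-(r j)) := by
    intro j
    rw [show (1:ℤ) - r j = 1 + -(r j) by ring, zpow_add₀ h2ne, zpow_one]
  have part1 : ∀ j : ℕ, (R + 1) * (2 : ℝ) ^ (-(r j)) < (l j : ℝ) * (2 : ℝ) ^ (-(r j)) - t₀ ∧
      (l j : ℝ) * (2 : ℝ) ^ (-(r j)) - t₀ < (R + 1) * (2 : ℝ) ^ (1 - r j) := by
    intro j
    obtain ⟨hlo, hhi⟩ := hfl j
    have hQ := hQpos (-(r j))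
    rw [key j, hone j]
    constructor
    · exact mul_lt_mul_of_pos_right (by linarith) hQ
    · nlinarith
  refine ⟨part1, ?_⟩
  -- part 2
  have part2 : ∀ j p : ℕ, 1 ≤ p →
      R * (2 : ℝ) ^ (-(r j)) + R * (2 : ℝ) ^ (-(r (j + p))) <
        |(l j : ℝ) * (2 : ℝ) ^ (-(r j)) - (l (j + p) : ℝ) * (2 : ℝ) ^ (-(r (j + p)))| := by
    intro j p hp
    set Qj : ℝ := (2:ℝ) ^ (-(r j))
    set Qk : ℝ := (2:ℝ) ^ (-(r (j + p)))
    have hQj := hQpos (-(r j))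
    have hQk := hQpos (-(r (j + p)))
    have hQkle : Qk ≤ Qj * ε := by
      have h1 : -(r (j + p)) ≤ -(r j) + -m₀ := by
        rw [hr, hr]; push_cast
        nlinarith [hm1, (Nat.one_le_cast.mpr hp : (1:ℤ) ≤ (p:ℤ))]
      calc Qk ≤ (2:ℝ) ^ (-(r j) + -m₀) := zpow_le_zpow_right₀ (by norm_num) h1
        _ = Qj * ε := by rw [zpow_add₀ h2ne]
    obtain ⟨ha1, ha2⟩ := part1 j
    obtain ⟨hb1, hb2⟩ := part1 (j + p)
    rw [hone (j + p)] at hb2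
    have hdiff : R * Qj + R * Qk <
        ((l j : ℝ) * Qj - t₀) - ((l (j + p) : ℝ) * Qk - t₀) := by
      nlinarith [mul_le_mul_of_nonneg_left hQkle (by linarith : (0:ℝ) ≤ 3*R + 2),
        mul_lt_mul_of_pos_left hε1 hQj]
    have hpos : 0 < (l j : ℝ) * Qj - (l (j + p) : ℝ) * Qk := by nlinarith
    rw [abs_of_pos hpos]; linarith
  refine ⟨part2, ?_⟩
  -- part 3
  have disj : ∀ i j : ℕ, i < j → Disjoint
      (Set.Icc ((l i : ℝ) * (2 : ℝ) ^ (-(r i)) - R * (2 : ℝ) ^ (-(r i)))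
        ((l i : ℝ) * (2 : ℝ) ^ (-(r i)) + R * (2 : ℝ) ^ (-(r i))))
      (Set.Icc ((l j : ℝ) * (2 : ℝ) ^ (-(r j)) - R * (2 : ℝ) ^ (-(r j)))
        ((l j : ℝ) * (2 : ℝ) ^ (-(r j)) + R * (2 : ℝ) ^ (-(r j)))) := by
    intro i j h
    rw [Set.disjoint_left]
    intro x hx1 hx2
    obtain ⟨p, hp1, rfl⟩ : ∃ p, 1 ≤ p ∧ j = i + p := ⟨j - i, by omega, by omega⟩
    have h2 := part2 i p hp1
    rw [Set.mem_Icc] at hx1 hx2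
    rcases abs_cases ((l i : ℝ) * (2 : ℝ) ^ (-(r i)) -
      (l (i + p) : ℝ) * (2 : ℝ) ^ (-(r (i + p)))) with ⟨he, _⟩ | ⟨he, _⟩ <;>
      rw [he] at h2 <;> linarith [hx1.1, hx1.2, hx2.1, hx2.2]
  intro i j hij
  rcases hij.lt_or_gt with h | h
  · exact disj i j h
  · exact (disj j i h).symm
end
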